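/- The nonreciprocal clustering output is a valid ultrametric: u^{NR}_X(x,x') = max(ũ^{NR}_X(x,x'), ũ^{NR}_X(x',x)) satisfies symmetry, the identity property (u^{NR}_X(x,x') = 0 iff x = x'), and the strong triangle inequality u^{NR}_X(x,x') ≤ max(u^{NR}_X(x,x''), u^{NR}_X(x'',x')). -/

import Mathlib

/-- Maximum dissimilarity over consecutive links of a chain (list of nodes). -/
def listCost {X : Type*} (A : X → X → ℝ) (l : List X) : ℝ :=
  (l.zip l.tail).foldr (fun p r => max (A p.1 p.2) r) 0

/-- Minimum over chains from `x` to `x'` of the maximum link cost. -/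
noncomputable def minChainCost {X : Type*} (A : X → X → ℝ) (x x' : X) : ℝ :=
  sInf {c : ℝ | ∃ l : List X, l.head? = some x ∧ l.getLast? = some x' ∧ listCost A l = c}

/-- Symmetrized dissimilarity Ā. -/
def symDis {X : Type*} (A : X → X → ℝ) (x x' : X) : ℝ := max (A x x') (A x' x)

/-- Reciprocal ultrametric. -/
noncomputable def uR {X : Type*} (A : X → X → ℝ) (x x' : X) : ℝ := minChainCost (symDis A) x x'

/-- Nonreciprocal ultrametric. -/
noncomputable def uNR {X : Type*} (A : X → X → ℝ) (x x' : X) : ℝ :=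
  max (minChainCost A x x') (minChainCost A x' x)

/-- A (finite, asymmetric) network dissimilarity: nonnegative, vanishing exactly on the diagonal. -/
def IsNetwork {X : Type*} (A : X → X → ℝ) : Prop :=
  (∀ x x', 0 ≤ A x x') ∧ (∀ x x', A x x' = 0 ↔ x = x')

/-- Ultrametric: nonnegative, symmetric, identity of indiscernibles, strong triangle inequality. -/
def IsUltra {X : Type*} (u : X → X → ℝ) : Prop :=
  (∀ x x', 0 ≤ u x x') ∧ (∀ x x', u x x' = u x' x) ∧
  (∀ x x', u x x' = 0 ↔ x = x') ∧
  (∀ x x' x'', u x x' ≤ max (u x x'') (u x'' x'))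


/-!
Gluing a chain from `x` to `x''` to a chain from `x''` to `x'` gives a chain from `x` to `x'`
whose cost is the larger of the two costs, so the minimal chain cost `ũ` already satisfies the
strong triangle inequality, and so does its symmetrization `max (ũ x x') (ũ x' x)`. Over a
finite node set only finitely many costs occur, so the infimum defining `ũ x x'` is attained
by a chain; for `x ≠ x'` that chain has a link between distinct nodes, whose dissimilarity
is positive.
-/

lemma getLast?_append_tail {α : Type*} {l₁ l₂ : List α} {x' : α}
    (h : l₁.getLast? = l₂.head?) (hx' : l₂.getLast? = some x') :
    (l₁ ++ l₂.tail).getLast? = some x' := by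
  cases l₂ with
  | nil => simp at hx'
  | cons b t =>
    rw [List.getLast?_cons] at hx'
    cases ht : t.getLast? <;> simp_all

section ChainCost

variable {X : Type*} (A : X → X → ℝ)

@[simp]
lemma listCost_singleton (a : X) : listCost A [a] = 0 := rfl

lemma listCost_cons_cons (a b : X) (l : List X) :
    listCost A (a :: b :: l) = max (A a b) (listCost A (b :: l)) := rfl

lemma listCost_nonneg (l : List X) : 0 ≤ listCost A l := by
  unfold listCost
  induction l.zip l.tail with
  | nil => exact le_rfl
  | cons p t ih => exact le_max_of_le_right ih

lemma listCost_mem_insert_range (l : List X) :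
    listCost A l ∈ insert 0 (Set.range fun p : X × X => A p.1 p.2) := by
  unfold listCost
  induction l.zip l.tail with
  | nil => exact Set.mem_insert 0 _
  | cons p t ih =>
    rcases max_choice (A p.1 p.2) (t.foldr (fun p r => max (A p.1 p.2) r) 0) with h | h
    · rw [List.foldr_cons, h]
      exact Set.mem_insert_of_mem _ ⟨p, rfl⟩
    · rwa [List.foldr_cons, h]

/-- The shared end node is kept once, so no loop `A y y` enters the cost. -/
lemma listCost_append_tail {l₁ l₂ : List X} (h : l₁.getLast? = l₂.head?) :
    listCost A (l₁ ++ l₂.tail) = max (listCost A l₁) (listCost A l₂) := by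
  induction l₁ with
  | nil =>
    obtain rfl : l₂ = [] := List.head?_eq_none_iff.mp h.symm
    simp
  | cons a t ih =>
    cases t with
    | nil =>
      obtain ⟨s, rfl⟩ : ∃ s, l₂ = a :: s := List.head?_eq_some_iff.mp h.symm
      simp [listCost_nonneg]
    | cons b t =>
      rw [List.getLast?_cons_cons] at h
      rw [List.cons_append, List.cons_append, listCost_cons_cons, ← List.cons_append, ih h,
        listCost_cons_cons, max_assoc]

lemma listCost_pos (hA : ∀ a b, a ≠ b → 0 < A a b) {l : List X} {x x' : X}
    (hx : l.head? = some x) (hx' : l.getLast? = some x') (hne : x ≠ x') :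
    0 < listCost A l := by
  induction l generalizing x with
  | nil => simp at hx
  | cons a t ih =>
    obtain rfl : a = x := Option.some_injective _ hx
    cases t with
    | nil => exact absurd (Option.some_injective _ hx') hne
    | cons b t =>
      rw [List.getLast?_cons_cons] at hx'
      rw [listCost_cons_cons]
      by_cases hab : a = b
      · subst hab
        exact lt_max_of_lt_right (ih rfl hx' hne)
      · exact lt_max_of_lt_left (hA a b hab)

def chainCosts (x x' : X) : Set ℝ :=
  {c : ℝ | ∃ l : List X, l.head? = some x ∧ l.getLast? = some x' ∧ listCost A l = c}

lemma minChainCost_eq_sInf (x x' : X) : minChainCost A x x' = sInf (chainCosts A x x') := rfl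

lemma listCost_mem_chainCosts {l : List X} {x x' : X} (hx : l.head? = some x)
    (hx' : l.getLast? = some x') : listCost A l ∈ chainCosts A x x' :=
  ⟨l, hx, hx', rfl⟩

lemma chainCosts_nonempty (x x' : X) : (chainCosts A x x').Nonempty :=
  ⟨_, listCost_mem_chainCosts A (l := [x, x']) rfl rfl⟩

lemma chainCosts_bddBelow (x x' : X) : BddBelow (chainCosts A x x') :=
  ⟨0, fun _ ⟨l, _, _, hl⟩ => hl ▸ listCost_nonneg A l⟩

lemma chainCosts_finite [Finite X] (x x' : X) : (chainCosts A x x').Finite :=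
  ((Set.finite_range _).insert 0).subset fun _ ⟨l, _, _, hl⟩ =>
    hl ▸ listCost_mem_insert_range A l

lemma minChainCost_nonneg (x x' : X) : 0 ≤ minChainCost A x x' :=
  le_csInf (chainCosts_nonempty A x x') fun _ ⟨l, _, _, hl⟩ => hl ▸ listCost_nonneg A l

lemma minChainCost_self (x : X) : minChainCost A x x = 0 :=
  le_antisymm (csInf_le (chainCosts_bddBelow A x x) (listCost_mem_chainCosts A (l := [x]) rfl rfl))
    (minChainCost_nonneg A x x)

lemma minChainCost_mem_chainCosts [Finite X] (x x' : X) :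
    minChainCost A x x' ∈ chainCosts A x x' :=
  (chainCosts_nonempty A x x').csInf_mem (chainCosts_finite A x x')

lemma minChainCost_pos [Finite X] (hA : ∀ a b, a ≠ b → 0 < A a b) {x x' : X}
    (hne : x ≠ x') : 0 < minChainCost A x x' := by
  obtain ⟨l, hx, hx', hl⟩ := minChainCost_mem_chainCosts A x x'
  exact hl ▸ listCost_pos A hA hx hx' hne

lemma minChainCost_le_max (x x' x'' : X) :
    minChainCost A x x' ≤ max (minChainCost A x x'') (minChainCost A x'' x') := by
  by_contra! hlt
  obtain ⟨_, ⟨l₁, hx, hx''₁, rfl⟩, hl₁⟩ :=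
    exists_lt_of_csInf_lt (chainCosts_nonempty A x x'') (lt_of_le_of_lt (le_max_left _ _) hlt)
  obtain ⟨_, ⟨l₂, hx''₂, hx', rfl⟩, hl₂⟩ :=
    exists_lt_of_csInf_lt (chainCosts_nonempty A x'' x') (lt_of_le_of_lt (le_max_right _ _) hlt)
  have hglue : l₁.getLast? = l₂.head? := hx''₁.trans hx''₂.symm
  have hle := csInf_le (chainCosts_bddBelow A x x') <|
    listCost_mem_chainCosts A (l := l₁ ++ l₂.tail) (by simp [hx]) (getLast?_append_tail hglue hx')
  rw [← minChainCost_eq_sInf, listCost_append_tail A hglue] at hle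
  exact hle.not_gt (max_lt hl₁ hl₂)

end ChainCost

lemma max_swap_le_max_max {X : Type*} {d : X → X → ℝ}
    (hd : ∀ x x' x'', d x x' ≤ max (d x x'') (d x'' x')) (x x' x'' : X) :
    max (d x x') (d x' x) ≤ max (max (d x x'') (d x'' x)) (max (d x'' x') (d x' x'')) :=
  max_le ((hd x x' x'').trans (max_le_max (le_max_left _ _) (le_max_left _ _)))
    ((hd x' x x'').trans <|
      (max_comm _ _).trans_le (max_le_max (le_max_right _ _) (le_max_right _ _)))

lemma IsNetwork.pos_of_ne {X : Type*} {A : X → X → ℝ} (hA : IsNetwork A) {a b : X}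
    (hab : a ≠ b) : 0 < A a b :=
  (hA.1 a b).lt_of_ne fun h => hab ((hA.2 a b).mp h.symm)

theorem nonreciprocal_is_ultrametric {X : Type*} [Fintype X] (A : X → X → ℝ)
    (hA : IsNetwork A) :
    (∀ x x' : X, uNR A x x' = uNR A x' x) ∧
    (∀ x x' : X, uNR A x x' = 0 ↔ x = x') ∧
    (∀ x x' x'' : X, uNR A x x' ≤ max (uNR A x x'') (uNR A x'' x')) := by
  refine ⟨fun x x' => max_comm _ _, fun x x' => ⟨fun h => ?_, ?_⟩,
    max_swap_le_max_max (minChainCost_le_max A)⟩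
  · by_contra hne
    exact (minChainCost_pos A (fun _ _ => hA.pos_of_ne) hne).not_ge (h ▸ le_max_left _ _)
  · rintro rfl
    simp [uNR, minChainCost_self]
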